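/- Let ε > 0, A > 0, C_h ≥ 0, and ψ₀' : (-1,1) → ℝ continuous, strictly increasing, with lim_{r→1} ψ₀'(r) = +∞. Let y_n : [τ₁, ∞) → (-1,1) solve ε y_n' + A ψ₀'(y_n) = C_h with y_n(τ₁) = 1 - 1/(2n). Then for every τ₂ > τ₁ there exists δ̃ ∈ (0,1), independent of n, such that y_n(t) ≤ 1 - δ̃ for all t ≥ τ₂ and all n ≥ 1. -/

import Mathlib

/-!
Near `r = 1` the term `A ψ₀'(r)` dominates, so the right-hand side `(C_h - A ψ₀'(y)) / ε` of the
ODE is below `-1` as soon as `y ≥ L` for some `L < 1`. Hence a solution decreases with speed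
greater than `1` while it stays above `L`, and it can never cross the level `L` upwards. Since every
solution starts below `1`, at time `t` it lies below `max L (1 - (t - τ₁))`, whatever `n` is.
-/

open Set Filter Topology

theorem le_sub_mul_of_hasDerivAt_lt {f f' : ℝ → ℝ} {s t b c : ℝ} (hst : s ≤ t)
    (hf : ∀ x ∈ Icc s t, HasDerivAt f (f' x) x) (hs : f s ≤ b)
    (bound : ∀ x ∈ Ico s t, f x = b - c * (x - s) → f' x < -c) :
    f t ≤ b - c * (t - s) :=
  image_le_of_deriv_right_lt_deriv_boundary (B := fun x => b - c * (x - s))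
    (fun x hx => (hf x hx).continuousAt.continuousWithinAt)
    (fun x hx => (hf x (Ico_subset_Icc_self hx)).hasDerivWithinAt) (by simpa using hs)
    (fun x => by simpa using ((hasDerivAt_id x).sub_const s).const_mul c |>.const_sub b)
    bound ⟨hst, le_rfl⟩

theorem le_max_sub_mul_of_hasDerivAt_lt {f f' : ℝ → ℝ} {s L c : ℝ} (hc : 0 < c)
    (hf : ∀ x ≥ s, HasDerivAt f (f' x) x) (hdecay : ∀ x ≥ s, L ≤ f x → f' x < -c) :
    ∀ t ≥ s, f t ≤ max L (f s - c * (t - s)) := by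
  have stays_below : ∀ s' ≥ s, f s' ≤ L → ∀ t ≥ s', f t ≤ L := by
    intro s' hs' hfs' t ht
    simpa using le_sub_mul_of_hasDerivAt_lt (c := 0) ht (fun x hx => hf x (hs'.trans hx.1)) hfs'
      fun x hx hfx => by linarith [hdecay x (hs'.trans hx.1) (by simp [hfx])]
  intro t ht
  by_cases hfs : f s ≤ L
  · exact le_max_of_le_left (stays_below s le_rfl hfs t ht)
  set t₀ := s + (f s - L) / c
  have ht₀ : f s - c * (t₀ - s) = L := by
    simp only [t₀, add_sub_cancel_left, mul_div_cancel₀ _ hc.ne', sub_sub_cancel]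
  have descends : ∀ t ∈ Icc s t₀, f t ≤ f s - c * (t - s) := by
    intro t ⟨hst, htt₀⟩
    refine le_sub_mul_of_hasDerivAt_lt hst (fun x hx => hf x hx.1) le_rfl fun x hx hfx => ?_
    have : c * (x - s) ≤ c * (t₀ - s) := by gcongr; linarith [hx.2]
    exact hdecay x hx.1 (by linarith)
  rcases le_total t t₀ with htt₀ | ht₀t
  · exact le_max_of_le_right (descends t ⟨ht, htt₀⟩)
  · have hst₀ : s ≤ t₀ := by
      have := div_pos (sub_pos.mpr (not_le.mp hfs)) hc
      linarith
    exact le_max_of_le_left <|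
      stays_below t₀ hst₀ (ht₀ ▸ descends t₀ ⟨hst₀, le_rfl⟩) t ht₀t

theorem stmt10_general (ε A C_h τ₁ : ℝ) (hε : 0 < ε) (hA : 0 < A)
    (ψ' : ℝ → ℝ)
    (htop : Filter.Tendsto ψ' (nhdsWithin 1 (Set.Iio 1)) Filter.atTop)
    (y : ℕ → ℝ → ℝ)
    (hy : ∀ n : ℕ, 1 ≤ n → ∀ t ≥ τ₁, y n t ∈ Set.Ioo (-1 : ℝ) 1)
    (hode : ∀ n : ℕ, 1 ≤ n → ∀ t ≥ τ₁, HasDerivAt (y n) ((C_h - A * ψ' (y n t)) / ε) t) :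
    ∀ τ₂ > τ₁, ∃ δ ∈ Set.Ioo (0 : ℝ) 1, ∀ n : ℕ, 1 ≤ n → ∀ t ≥ τ₂, y n t ≤ 1 - δ := by
  intro τ₂ hτ₂
  have hrhs : Tendsto (fun r => (C_h - A * ψ' r) / ε) (𝓝[<] 1) atBot :=
    (tendsto_atBot_add_const_left _ C_h
      (tendsto_neg_atTop_atBot.comp (htop.const_mul_atTop hA))).atBot_div_const hε
  obtain ⟨L, hL1, hL⟩ := mem_nhdsLT_iff_exists_Ico_subset.mp (hrhs.eventually_lt_atBot (-1))
  set δ := min (min (1 - L) (τ₂ - τ₁)) (1 / 2)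
  have hδL : δ ≤ 1 - L := (min_le_left _ _).trans (min_le_left _ _)
  have hδτ : δ ≤ τ₂ - τ₁ := (min_le_left _ _).trans (min_le_right _ _)
  refine ⟨δ, ⟨lt_min (lt_min (sub_pos.mpr hL1) (sub_pos.mpr hτ₂)) one_half_pos,
    (min_le_right _ _).trans_lt one_half_lt_one⟩, fun n hn t ht => ?_⟩
  have hyn := le_max_sub_mul_of_hasDerivAt_lt one_pos (hode n hn)
    (fun x hx hLx => hL ⟨hLx, (hy n hn x hx).2⟩) t (hτ₂.le.trans ht)
  have hy₀ : y n τ₁ < 1 := (hy n hn τ₁ le_rfl).2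
  exact hyn.trans (max_le (by linarith) (by linarith))

/-- Uniform-in-n instantaneous separation: solutions yₙ of ε y' + A ψ₀'(y) = C_h
with yₙ(τ₁) = 1 - 1/(2n) satisfy yₙ(t) ≤ 1 - δ̃ for all t ≥ τ₂ > τ₁, with δ̃
independent of n. -/
theorem stmt10 (ε A C_h τ₁ : ℝ) (hε : 0 < ε) (hA : 0 < A) (hC : 0 ≤ C_h)
    (ψ' : ℝ → ℝ)
    (hcont : ContinuousOn ψ' (Set.Ioo (-1 : ℝ) 1))
    (hmono : StrictMonoOn ψ' (Set.Ioo (-1 : ℝ) 1))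
    (htop : Filter.Tendsto ψ' (nhdsWithin 1 (Set.Iio 1)) Filter.atTop)
    (y : ℕ → ℝ → ℝ)
    (hy : ∀ n : ℕ, 1 ≤ n → ∀ t ≥ τ₁, y n t ∈ Set.Ioo (-1 : ℝ) 1)
    (hode : ∀ n : ℕ, 1 ≤ n → ∀ t ≥ τ₁, HasDerivAt (y n) ((C_h - A * ψ' (y n t)) / ε) t)
    (hinit : ∀ n : ℕ, 1 ≤ n → y n τ₁ = 1 - 1 / (2 * (n : ℝ))) :
    ∀ τ₂ > τ₁, ∃ δ ∈ Set.Ioo (0 : ℝ) 1, ∀ n : ℕ, 1 ≤ n → ∀ t ≥ τ₂, y n t ≤ 1 - δ :=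
  stmt10_general ε A C_h τ₁ hε hA ψ' htop y hy hode
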